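/- At every equilibrium the Jacobian of the multi-converter vector field has a nontrivial kernel containing the tangent vector of the symmetry orbit: if z* = (γ*, ṽ*, i*, v*, i_ℓ*) satisfies f(z*, u) = 0 for some input u ∈ ℝⁿ, then the total derivative D_z f(z*, u) (an (6n+2m)×(6n+2m) real matrix) maps the vector v(z*) = (1ₙ, 0, 𝐉_n i*, 𝐉_n v*, 𝐉_m i_ℓ*) to zero. -/

import Mathlib

noncomputable section
open Matrix
open scoped Kronecker

abbrev PSState (n m : ℕ) :=
  (Fin n → ℝ) × (Fin n → ℝ) × (Fin n × Fin 2 → ℝ) × (Fin n × Fin 2 → ℝ) × (Fin m × Fin 2 → ℝ)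

def J2 : Matrix (Fin 2) (Fin 2) ℝ := !![0, -1; 1, 0]
def rvec (θ : ℝ) : Fin 2 → ℝ := ![-(Real.sin θ), Real.cos θ]
def RotM {n : ℕ} (γ : Fin n → ℝ) : Matrix (Fin n × Fin 2) (Fin n) ℝ :=
  Matrix.of fun p j => if p.1 = j then rvec (γ j) p.2 else 0
def bigJ (k : ℕ) : Matrix (Fin k × Fin 2) (Fin k × Fin 2) ℝ :=
  (1 : Matrix (Fin k) (Fin k) ℝ) ⊗ₖ J2

def ZR (n : ℕ) (R L ωs : ℝ) : Matrix (Fin n × Fin 2) (Fin n × Fin 2) ℝ := R • 1 + (L * ωs) • bigJ n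
def ZC (n : ℕ) (G C ωs : ℝ) : Matrix (Fin n × Fin 2) (Fin n × Fin 2) ℝ := G • 1 + (C * ωs) • bigJ n
def Zl (m : ℕ) (Rl Ll ωs : ℝ) : Matrix (Fin m × Fin 2) (Fin m × Fin 2) ℝ := Rl • 1 + (Ll * ωs) • bigJ m
def BB {n m : ℕ} (𝓑 : Matrix (Fin n) (Fin m) ℝ) : Matrix (Fin n × Fin 2) (Fin m × Fin 2) ℝ :=
  𝓑 ⊗ₖ (1 : Matrix (Fin 2) (Fin 2) ℝ)

/-- The multi-converter power-system vector field. -/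
def psf {n m : ℕ} (𝓑 : Matrix (Fin n) (Fin m) ℝ)
    (R L C G Rl Ll Cdc Kp η ωs vdc μ : ℝ)
    (z : PSState n m) (u : Fin n → ℝ) : PSState n m :=
  ( η • z.2.1,
    Cdc⁻¹ • (-(Kp • z.2.1) - (μ / 2) • ((RotM z.1)ᵀ *ᵥ z.2.2.1) + u),
    L⁻¹ • (-(ZR n R L ωs *ᵥ z.2.2.1) + (μ / 2) • (RotM z.1 *ᵥ (z.2.1 + Function.const _ vdc)) - z.2.2.2.1),
    C⁻¹ • (-(ZC n G C ωs *ᵥ z.2.2.2.1) + z.2.2.1 - BB 𝓑 *ᵥ z.2.2.2.2),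
    Ll⁻¹ • (-(Zl m Rl Ll ωs *ᵥ z.2.2.2.2) + (BB 𝓑)ᵀ *ᵥ z.2.2.2.1) )

/-- The tangent vector `v(z*) = (1ₙ, 0, 𝐉ₙ i*, 𝐉ₙ v*, 𝐉ₘ i_ℓ*)` of the symmetry orbit. -/
def tanVec {n m : ℕ} (zstar : PSState n m) : PSState n m :=
  (Function.const _ 1, 0, bigJ n *ᵥ zstar.2.2.1, bigJ n *ᵥ zstar.2.2.2.1,
    bigJ m *ᵥ zstar.2.2.2.2)

/- ## Auxiliary lemmas -/

lemma rvec0 (θ : ℝ) : rvec θ 0 = -Real.sin θ := rfl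
lemma rvec1 (θ : ℝ) : rvec θ 1 = Real.cos θ := rfl

lemma bigJ_mulVec {k : ℕ} (x : Fin k × Fin 2 → ℝ) (p : Fin k × Fin 2) :
    (bigJ k *ᵥ x) p = if p.2 = 0 then -x (p.1, 1) else x (p.1, 0) := by
  obtain ⟨j, s⟩ := p
  simp [bigJ, mulVec, dotProduct, Fintype.sum_prod_type, Matrix.one_apply, J2,
    Fin.sum_univ_two, Finset.sum_ite_eq, ite_mul, zero_mul]
  fin_cases s <;> simp

lemma RotM_mulVec {n : ℕ} (γ : Fin n → ℝ) (y : Fin n → ℝ) (p : Fin n × Fin 2) :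
    (RotM γ *ᵥ y) p = rvec (γ p.1) p.2 * y p.1 := by
  simp [RotM, mulVec, dotProduct, ite_mul, zero_mul, Finset.sum_ite_eq]

lemma RotMT_mulVec {n : ℕ} (γ : Fin n → ℝ) (x : Fin n × Fin 2 → ℝ) (k : Fin n) :
    ((RotM γ)ᵀ *ᵥ x) k = -Real.sin (γ k) * x (k, 0) + Real.cos (γ k) * x (k, 1) := by
  simp [RotM, mulVec, dotProduct, Fintype.sum_prod_type, transpose_apply, ite_mul, zero_mul,
    Finset.sum_ite_eq', Fin.sum_univ_two, rvec0, rvec1]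

lemma BB_mulVec {n m : ℕ} (𝓑 : Matrix (Fin n) (Fin m) ℝ) (y : Fin m × Fin 2 → ℝ)
    (p : Fin n × Fin 2) : (BB 𝓑 *ᵥ y) p = ∑ j, 𝓑 p.1 j * y (j, p.2) := by
  simp [BB, mulVec, dotProduct, Fintype.sum_prod_type, Matrix.one_apply, mul_ite, mul_zero,
    Finset.sum_ite_eq]

lemma BBT_mulVec {n m : ℕ} (𝓑 : Matrix (Fin n) (Fin m) ℝ) (x : Fin n × Fin 2 → ℝ)
    (p : Fin m × Fin 2) : ((BB 𝓑)ᵀ *ᵥ x) p = ∑ k, 𝓑 k p.1 * x (k, p.2) := by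
  simp [BB, mulVec, dotProduct, Fintype.sum_prod_type, transpose_apply, Matrix.one_apply,
    mul_ite, mul_zero, ite_mul, zero_mul, Finset.sum_ite_eq', Finset.sum_ite_eq]

lemma Zgen_mulVec {k : ℕ} (a b : ℝ) (x : Fin k × Fin 2 → ℝ) (p : Fin k × Fin 2) :
    ((a • 1 + b • bigJ k) *ᵥ x) p = a * x p + b * (bigJ k *ᵥ x) p := by
  simp [Matrix.add_mulVec, Matrix.smul_mulVec, Matrix.one_mulVec]

/- ## The symmetry-orbit curve -/

def rot2c (t : ℝ) {k : ℕ} (x : Fin k × Fin 2 → ℝ) : Fin k × Fin 2 → ℝ :=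
  fun p => if p.2 = 0 then Real.cos t * x (p.1, 0) - Real.sin t * x (p.1, 1)
           else Real.sin t * x (p.1, 0) + Real.cos t * x (p.1, 1)

lemma rot2c_zero {k : ℕ} (x : Fin k × Fin 2 → ℝ) : rot2c 0 x = x := by
  funext p; obtain ⟨j, s⟩ := p; fin_cases s <;> simp [rot2c]

lemma rot2c_zero' (t : ℝ) {k : ℕ} : rot2c t (0 : Fin k × Fin 2 → ℝ) = 0 := by
  funext p; simp [rot2c]

lemma rot2c_add (t : ℝ) {k : ℕ} (x y : Fin k × Fin 2 → ℝ) :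
    rot2c t (x + y) = rot2c t x + rot2c t y := by
  funext p; simp only [rot2c, Pi.add_apply]; split <;> ring

lemma rot2c_neg (t : ℝ) {k : ℕ} (x : Fin k × Fin 2 → ℝ) :
    rot2c t (-x) = -rot2c t x := by
  funext p; simp only [rot2c, Pi.neg_apply]; split <;> ring

lemma rot2c_sub (t : ℝ) {k : ℕ} (x y : Fin k × Fin 2 → ℝ) :
    rot2c t (x - y) = rot2c t x - rot2c t y := by
  funext p; simp only [rot2c, Pi.sub_apply]; split <;> ring

lemma rot2c_smul (t a : ℝ) {k : ℕ} (x : Fin k × Fin 2 → ℝ) :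
    rot2c t (a • x) = a • rot2c t x := by
  funext p; simp only [rot2c, Pi.smul_apply, smul_eq_mul]; split <;> ring

lemma hasDerivAt_rot2c {k : ℕ} (x : Fin k × Fin 2 → ℝ) :
    HasDerivAt (fun t => rot2c t x) (bigJ k *ᵥ x) 0 := by
  rw [hasDerivAt_pi]
  intro p
  obtain ⟨j, s⟩ := p
  fin_cases s <;>
  · simp only [rot2c, bigJ_mulVec]
    norm_num
    first
      | exact (((Real.hasDerivAt_cos 0).mul_const _).sub
          ((Real.hasDerivAt_sin 0).mul_const _)).congr_deriv (by norm_num)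
      | exact (((Real.hasDerivAt_sin 0).mul_const _).add
          ((Real.hasDerivAt_cos 0).mul_const _)).congr_deriv (by norm_num)

lemma diffAt_mulVec {ι κ : Type*} [Fintype ι] [Fintype κ] [DecidableEq ι] (M : Matrix κ ι ℝ)
    {E : Type*} [NormedAddCommGroup E] [NormedSpace ℝ E] {f : E → ι → ℝ} {x : E}
    (hf : DifferentiableAt ℝ f x) : DifferentiableAt ℝ (fun e => M *ᵥ f e) x := by
  have h : DifferentiableAt ℝ (fun v : ι → ℝ => M *ᵥ v) (f x) := by
    have := (LinearMap.toContinuousLinearMap (M.mulVecLin)).differentiableAt (x := f x)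
    simpa using this
  exact h.comp x hf

/- ## Equivariance lemmas -/

lemma Zgen_rot2c {k : ℕ} (a b t : ℝ) (x : Fin k × Fin 2 → ℝ) :
    (a • 1 + b • bigJ k) *ᵥ rot2c t x = rot2c t ((a • 1 + b • bigJ k) *ᵥ x) := by
  funext p
  obtain ⟨j, s⟩ := p
  fin_cases s <;>
    simp only [Zgen_mulVec, bigJ_mulVec, rot2c] <;> norm_num <;> ring

lemma BB_rot2c {n m : ℕ} (𝓑 : Matrix (Fin n) (Fin m) ℝ) (t : ℝ) (y : Fin m × Fin 2 → ℝ) :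
    BB 𝓑 *ᵥ rot2c t y = rot2c t (BB 𝓑 *ᵥ y) := by
  funext p
  obtain ⟨j, s⟩ := p
  fin_cases s <;>
  · simp only [BB_mulVec, rot2c]
    norm_num [Finset.mul_sum, ← Finset.sum_sub_distrib, ← Finset.sum_add_distrib]
    exact Finset.sum_congr rfl fun i _ => by ring

lemma BBT_rot2c {n m : ℕ} (𝓑 : Matrix (Fin n) (Fin m) ℝ) (t : ℝ) (x : Fin n × Fin 2 → ℝ) :
    (BB 𝓑)ᵀ *ᵥ rot2c t x = rot2c t ((BB 𝓑)ᵀ *ᵥ x) := by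
  funext p
  obtain ⟨j, s⟩ := p
  fin_cases s <;>
  · simp only [BBT_mulVec, rot2c]
    norm_num [Finset.mul_sum, ← Finset.sum_sub_distrib, ← Finset.sum_add_distrib]
    exact Finset.sum_congr rfl fun i _ => by ring

lemma RotM_shift {n : ℕ} (γ : Fin n → ℝ) (t : ℝ) (y : Fin n → ℝ) :
    RotM (γ + t • Function.const (Fin n) 1) *ᵥ y = rot2c t (RotM γ *ᵥ y) := by
  funext p
  obtain ⟨j, s⟩ := p
  fin_cases s <;>
    simp [RotM_mulVec, rot2c, rvec, Real.sin_add, Real.cos_add] <;> ring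

lemma RotMT_shift {n : ℕ} (γ : Fin n → ℝ) (t : ℝ) (x : Fin n × Fin 2 → ℝ) :
    (RotM (γ + t • Function.const (Fin n) 1))ᵀ *ᵥ rot2c t x = (RotM γ)ᵀ *ᵥ x := by
  funext k
  simp only [RotMT_mulVec, rot2c, Pi.add_apply, Pi.smul_apply, Function.const_apply,
    smul_eq_mul, mul_one, Real.sin_add, Real.cos_add]
  norm_num
  linear_combination (-Real.sin (γ k) * x (k,0) + Real.cos (γ k) * x (k,1)) *
    (Real.sin_sq_add_cos_sq t)


/- ## Differentiability of the vector field -/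

lemma psf_differentiableAt {n m : ℕ} (𝓑 : Matrix (Fin n) (Fin m) ℝ)
    (R L C G Rl Ll Cdc Kp η ωs vdc μ : ℝ) (u : Fin n → ℝ) (zs : PSState n m) :
    DifferentiableAt ℝ (fun z => psf 𝓑 R L C G Rl Ll Cdc Kp η ωs vdc μ z u) zs := by
  simp only [psf]
  have pγ : DifferentiableAt ℝ (fun z : PSState n m => z.1) zs := by fun_prop
  have pvt : DifferentiableAt ℝ (fun z : PSState n m => z.2.1) zs := by fun_prop
  have pii : DifferentiableAt ℝ (fun z : PSState n m => z.2.2.1) zs := by fun_prop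
  have pvv : DifferentiableAt ℝ (fun z : PSState n m => z.2.2.2.1) zs := by fun_prop
  have pil : DifferentiableAt ℝ (fun z : PSState n m => z.2.2.2.2) zs := by fun_prop
  have hrotT : DifferentiableAt ℝ (fun z : PSState n m => (RotM z.1)ᵀ *ᵥ z.2.2.1) zs := by
    rw [differentiableAt_pi]
    intro k
    simp only [RotMT_mulVec]
    fun_prop
  have hrot : DifferentiableAt ℝ
      (fun z : PSState n m => RotM z.1 *ᵥ (z.2.1 + Function.const (Fin n) vdc)) zs := by
    rw [differentiableAt_pi]
    intro p
    obtain ⟨k, s⟩ := p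
    fin_cases s <;>
    · simp only [RotM_mulVec]
      simp [rvec]
      fun_prop
  refine DifferentiableAt.prodMk (by fun_prop) (DifferentiableAt.prodMk ?_
    (DifferentiableAt.prodMk ?_ (DifferentiableAt.prodMk ?_ ?_)))
  · exact (((pvt.const_smul Kp).neg.sub (hrotT.const_smul (μ / 2))).add_const u).const_smul Cdc⁻¹
  · exact (((diffAt_mulVec (ZR n R L ωs) pii).neg.add (hrot.const_smul (μ / 2))).sub pvv).const_smul L⁻¹
  · exact (((diffAt_mulVec (ZC n G C ωs) pvv).neg.add pii).sub (diffAt_mulVec (BB 𝓑) pil)).const_smul C⁻¹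
  · exact ((diffAt_mulVec (Zl m Rl Ll ωs) pil).neg.add (diffAt_mulVec (BB 𝓑)ᵀ pvv)).const_smul Ll⁻¹

/- ## Equivariance of the vector field along the orbit -/

lemma psf_orbit {n m : ℕ} (𝓑 : Matrix (Fin n) (Fin m) ℝ)
    (R L C G Rl Ll Cdc Kp η ωs vdc μ : ℝ) (u : Fin n → ℝ)
    (γ vt : Fin n → ℝ) (ii vv : Fin n × Fin 2 → ℝ) (il : Fin m × Fin 2 → ℝ)
    (heq : psf 𝓑 R L C G Rl Ll Cdc Kp η ωs vdc μ (γ, vt, ii, vv, il) u = 0) (t : ℝ) :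
    psf 𝓑 R L C G Rl Ll Cdc Kp η ωs vdc μ
      (γ + t • Function.const (Fin n) 1, vt, rot2c t ii, rot2c t vv, rot2c t il) u = 0 := by
  have h1 := congrArg (fun z : PSState n m => z.1) heq
  have h2 := congrArg (fun z : PSState n m => z.2.1) heq
  have h3 := congrArg (fun z : PSState n m => z.2.2.1) heq
  have h4 := congrArg (fun z : PSState n m => z.2.2.2.1) heq
  have h5 := congrArg (fun z : PSState n m => z.2.2.2.2) heq
  simp only [psf, Prod.fst_zero, Prod.snd_zero] at h1 h2 h3 h4 h5
  simp only [psf]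
  refine Prod.ext ?_ (Prod.ext ?_ (Prod.ext ?_ (Prod.ext ?_ ?_)))
  · exact h1
  · show Cdc⁻¹ • (-(Kp • vt) - (μ / 2) • ((RotM (γ + t • Function.const (Fin n) 1))ᵀ *ᵥ rot2c t ii) + u) = 0
    rw [RotMT_shift]
    exact h2
  · show L⁻¹ • (-(ZR n R L ωs *ᵥ rot2c t ii)
      + (μ / 2) • (RotM (γ + t • Function.const (Fin n) 1) *ᵥ (vt + Function.const _ vdc))
      - rot2c t vv) = 0
    rw [ZR, Zgen_rot2c, RotM_shift, ← rot2c_neg, ← rot2c_smul, ← rot2c_add, ← rot2c_sub,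
      ← rot2c_smul]
    rw [ZR] at h3
    rw [h3, rot2c_zero']
  · show C⁻¹ • (-(ZC n G C ωs *ᵥ rot2c t vv) + rot2c t ii - BB 𝓑 *ᵥ rot2c t il) = 0
    rw [ZC, Zgen_rot2c, BB_rot2c, ← rot2c_neg, ← rot2c_add, ← rot2c_sub, ← rot2c_smul]
    rw [ZC] at h4
    rw [h4, rot2c_zero']
  · show Ll⁻¹ • (-(Zl m Rl Ll ωs *ᵥ rot2c t il) + (BB 𝓑)ᵀ *ᵥ rot2c t vv) = 0
    rw [Zl, Zgen_rot2c, BBT_rot2c, ← rot2c_neg, ← rot2c_add, ← rot2c_smul]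
    rw [Zl] at h5
    rw [h5, rot2c_zero']

/- ## Derivative of the orbit curve -/

lemma orbit_hasDerivAt {n m : ℕ} (γ vt : Fin n → ℝ) (ii vv : Fin n × Fin 2 → ℝ)
    (il : Fin m × Fin 2 → ℝ) :
    HasDerivAt (fun t : ℝ => ((γ + t • Function.const (Fin n) 1, vt, rot2c t ii,
        rot2c t vv, rot2c t il) : PSState n m))
      (tanVec ((γ, vt, ii, vv, il) : PSState n m)) 0 := by
  refine HasDerivAt.prodMk ?_ (HasDerivAt.prodMk ?_ (HasDerivAt.prodMk ?_ (HasDerivAt.prodMk ?_ ?_)))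
  · rw [hasDerivAt_pi]
    intro k
    simp only [Pi.add_apply, Pi.smul_apply, Function.const_apply, smul_eq_mul, mul_one, tanVec]
    exact (hasDerivAt_id 0).const_add (γ k)
  · exact hasDerivAt_const 0 vt
  · exact hasDerivAt_rot2c ii
  · exact hasDerivAt_rot2c vv
  · exact hasDerivAt_rot2c il

lemma orbit_zero {n m : ℕ} (γ vt : Fin n → ℝ) (ii vv : Fin n × Fin 2 → ℝ)
    (il : Fin m × Fin 2 → ℝ) :
    ((γ + (0:ℝ) • Function.const (Fin n) 1, vt, rot2c 0 ii, rot2c 0 vv, rot2c 0 il)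
      : PSState n m) = (γ, vt, ii, vv, il) := by
  simp [rot2c_zero]

theorem stmt4 {n m : ℕ} (𝓑 : Matrix (Fin n) (Fin m) ℝ)
    (R L C G Rl Ll Cdc Kp η ωs vdc μ : ℝ)
    (hR : 0 < R) (hL : 0 < L) (hC : 0 < C) (hG : 0 < G) (hRl : 0 < Rl) (hLl : 0 < Ll)
    (hCdc : 0 < Cdc) (hKp : 0 < Kp) (hη : 0 < η) (hωs : 0 < ωs) (hvdc : 0 < vdc)
    (hμ : μ ∈ Set.Ioo (0:ℝ) 1)
    (zstar : PSState n m) (u : Fin n → ℝ)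
    (heq : psf 𝓑 R L C G Rl Ll Cdc Kp η ωs vdc μ zstar u = 0) :
    fderiv ℝ (fun z => psf 𝓑 R L C G Rl Ll Cdc Kp η ωs vdc μ z u) zstar (tanVec zstar) = 0 := by
  obtain ⟨γ, vt, ii, vv, il⟩ := zstar
  set g : PSState n m → PSState n m := fun z => psf 𝓑 R L C G Rl Ll Cdc Kp η ωs vdc μ z u with hg
  set c : ℝ → PSState n m := fun t =>
    (γ + t • Function.const (Fin n) 1, vt, rot2c t ii, rot2c t vv, rot2c t il) with hc
  have hc0 : c 0 = (γ, vt, ii, vv, il) := orbit_zero γ vt ii vv il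
  have hcd : HasDerivAt c (tanVec ((γ, vt, ii, vv, il) : PSState n m)) 0 :=
    orbit_hasDerivAt γ vt ii vv il
  have hdiff : DifferentiableAt ℝ g (c 0) := by
    rw [hc0]
    exact psf_differentiableAt 𝓑 R L C G Rl Ll Cdc Kp η ωs vdc μ u _
  have hcomp : HasDerivAt (fun t => g (c t))
      (fderiv ℝ g (γ, vt, ii, vv, il) (tanVec ((γ, vt, ii, vv, il) : PSState n m))) 0 := by
    have := hdiff.hasFDerivAt.comp_hasDerivAt 0 hcd
    rw [hc0] at this
    exact this
  have hzero : HasDerivAt (fun t => g (c t)) 0 0 := by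
    have he : (fun t => g (c t)) = fun _ => (0 : PSState n m) :=
      funext fun t => psf_orbit 𝓑 R L C G Rl Ll Cdc Kp η ωs vdc μ u γ vt ii vv il heq t
    rw [he]
    exact hasDerivAt_const 0 0
  exact hcomp.unique hzero
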